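/- A bit-flip on qubit 3 of the encoded state produces error syndrome 0011 and a phase-flipped data qubit: for every c = (c(0), c(1)) ∈ ℂ² there is a nonzero complex scalar α independent of c such that T(B₃(f(c))) = α · |0011⟩ ⊗ (c(0)|0⟩ − c(1)|1⟩); applying σ_Z to the data qubit then restores the original state. -/

import Mathlib

open scoped BigOperators

noncomputable section

/-- The 5-qubit state space `V₅ = (Fin 5 → Fin 2) → ℂ ≅ ℂ^32` with the standard
Hermitian inner product. -/
abbrev V5 : Type := EuclideanSpace ℂ (Fin 5 → Fin 2)

/-- The phase exponent `γ(x,y) = x(y₀+y₁+y₂) + y₀y₁ + y₀y₃ + y₁y₄ + y₂y₃ + y₂y₄ + y₃y₄`,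
read modulo 2 via `(-1)^·`. -/
def gam (x : Fin 2) (y : Fin 5 → Fin 2) : ℕ :=
  x.val * ((y 0).val + (y 1).val + (y 2).val)
    + (y 0).val * (y 1).val + (y 0).val * (y 3).val + (y 1).val * (y 4).val
    + (y 2).val * (y 3).val + (y 2).val * (y 4).val + (y 3).val * (y 4).val

/-- The graph-code encoding `f : ℂ² → V₅`, `f(c)(y) = Σ_x (−1)^{γ(x,y)} c(x)`
(normalization factors omitted). -/
def enc (c : Fin 2 → ℂ) : V5 := WithLp.toLp 2 (fun y => ∑ x : Fin 2, (-1 : ℂ) ^ gam x y * c x)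

/-- The decoding phase exponent `θ`, with `z = (l₀, l₁, l₃, l₄, x̂)`. -/
def theta (y z : Fin 5 → Fin 2) : ℕ :=
  (z 4).val * ((y 0).val + (y 1).val + (y 2).val)
    + (y 0).val * (y 1).val + (y 0).val * (y 3).val + (y 1).val * (y 4).val
    + (y 2).val * (y 3).val + (y 2).val * (y 4).val + (y 3).val * (y 4).val
    + (y 0).val * (z 0).val + (y 1).val * (z 1).val + (y 3).val * (z 2).val
    + (y 4).val * (z 3).val

/-- The graph decoding operator `T : V₅ → V₅`,
`T|y⟩ = Σ_{l₀l₁l₃l₄, x̂} (−1)^θ |l₀l₁l₃l₄x̂⟩`. -/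
def dec (ψ : V5) : V5 := WithLp.toLp 2 (fun z => ∑ y : Fin 5 → Fin 2, (-1 : ℂ) ^ theta y z * ψ y)

/-- The product state `|s₀s₁s₂s₃⟩ ⊗ (a|0⟩ + b|1⟩)` in `V₅`: four syndrome qubits
followed by one data qubit. -/
def synData (s : Fin 4 → Fin 2) (a b : ℂ) : V5 :=
  WithLp.toLp 2 (fun y => (if y 0 = s 0 ∧ y 1 = s 1 ∧ y 2 = s 2 ∧ y 3 = s 3 then (1 : ℂ) else 0)
    * (if y 4 = 0 then a else b))

/-- Bit-flip (Pauli `σ_X`) on qubit `i` (0-indexed: qubit `j` of the paper is `i = j - 1`). -/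
def bitFlip (i : Fin 5) (ψ : V5) : V5 := WithLp.toLp 2 (fun y => ψ (Function.update y i (1 - y i)))

/-- Phase-flip (Pauli `σ_Z`) on qubit `i` (0-indexed). -/
def phaseFlip (i : Fin 5) (ψ : V5) : V5 := WithLp.toLp 2 (fun y => (-1 : ℂ) ^ (y i).val * ψ y)

/-! After the bit flip on qubit 3, the quadratic parts of the two phases `θ` and `γ` cancel
modulo 2, so each matrix entry of `T ∘ B₃ ∘ f` is a character sum `Σ_y (-1)^{x + a·y}` over
`(ℤ/2)⁵`. It equals `±32` when the coefficient vector `a` vanishes mod 2, which happens exactly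
for the output `|0011x⟩`, and `0` otherwise. -/

lemma neg_one_pow_eq_of_natCast_zmod_two_eq {R : Type*} [Monoid R] [HasDistribNeg R] {m n : ℕ}
    (h : (m : ZMod 2) = n) : (-1 : R) ^ m = (-1) ^ n :=
  neg_one_pow_congr <| by rw [← ZMod.natCast_eq_zero_iff_even, ← ZMod.natCast_eq_zero_iff_even, h]

lemma sum_fin_two_neg_one_pow_mul (a : ℕ) :
    ∑ b : Fin 2, (-1 : ℂ) ^ (b.val * a) = if Even a then 2 else 0 := by
  rcases Nat.even_or_odd a with h | h <;> simp [Fin.sum_univ_two, h.neg_one_pow, h]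

lemma sum_pi_fin_two_neg_one_pow_sum_mul {n : ℕ} (a : Fin n → ℕ) :
    ∑ y : Fin n → Fin 2, (-1 : ℂ) ^ (∑ i, (y i).val * a i)
      = if ∀ i, Even (a i) then 2 ^ n else 0 := by
  simp_rw [← Finset.prod_pow_eq_pow_sum]
  rw [← Fintype.prod_sum (fun i (b : Fin 2) => (-1 : ℂ) ^ (b.val * a i))]
  simp_rw [sum_fin_two_neg_one_pow_mul]
  simp [Fintype.prod_ite_zero]

def bitFlipTwoPhaseCoeff (z : Fin 5 → Fin 2) (x : Fin 2) : Fin 5 → ℕ :=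
  ![(z 0).val + (z 4).val + x.val, (z 1).val + (z 4).val + x.val, (z 4).val + x.val,
    (z 2).val + 1, (z 3).val + 1]

lemma natCast_val_one_sub_fin_two (b : Fin 2) : ((1 - b).val : ZMod 2) = 1 + b.val := by
  fin_cases b <;> decide

/-- Flipping `y₂` adds `y₃ + y₄` to the quadratic form of the graph; the quadratic form itself
then occurs twice and drops out modulo 2. -/
lemma theta_add_gam_bitFlip_two_cast (y z : Fin 5 → Fin 2) (x : Fin 2) :
    ((theta y z + gam x (Function.update y 2 (1 - y 2)) : ℕ) : ZMod 2)
      = ((x.val + ∑ i, (y i).val * bitFlipTwoPhaseCoeff z x i : ℕ) : ZMod 2) := by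
  simp only [theta, gam, bitFlipTwoPhaseCoeff, Fin.sum_univ_five, Function.update_self,
    ne_eq, Fin.reduceEq, not_false_eq_true, Function.update_of_ne]
  push_cast
  rw [natCast_val_one_sub_fin_two]
  ring_nf
  reduce_mod_char

lemma bitFlipTwoPhaseCoeff_even_iff (z : Fin 5 → Fin 2) (x : Fin 2) :
    (∀ i, Even (bitFlipTwoPhaseCoeff z x i)) ↔
      (z 0 = 0 ∧ z 1 = 0 ∧ z 2 = 1 ∧ z 3 = 1) ∧ z 4 = x := by
  revert z x
  decide

lemma dec_bitFlip_two_enc_apply (c : Fin 2 → ℂ) (z : Fin 5 → Fin 2) :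
    dec (bitFlip 2 (enc c)) z = ∑ x : Fin 2, (-1 : ℂ) ^ x.val * c x *
      ∑ y : Fin 5 → Fin 2, (-1 : ℂ) ^ (∑ i, (y i).val * bitFlipTwoPhaseCoeff z x i) := by
  simp only [dec, bitFlip, enc, Finset.mul_sum]
  rw [Finset.sum_comm]
  refine Finset.sum_congr rfl fun x _ => Finset.sum_congr rfl fun y _ => ?_
  calc (-1 : ℂ) ^ theta y z * ((-1) ^ gam x (Function.update y 2 (1 - y 2)) * c x)
      = (-1) ^ (theta y z + gam x (Function.update y 2 (1 - y 2))) * c x := by ring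
    _ = (-1) ^ (x.val + ∑ i, (y i).val * bitFlipTwoPhaseCoeff z x i) * c x := by
      rw [neg_one_pow_eq_of_natCast_zmod_two_eq (theta_add_gam_bitFlip_two_cast y z x)]
    _ = _ := by ring

/-- A bit-flip on qubit 3 produces syndrome `0011` and a phase-flipped data qubit: `T(B₃ f(c)) = α |0011⟩ ⊗ (c(0)|0⟩ − c(1)|1⟩)` with `α ≠ 0` independent of `c`; applying `σ_Z` to the data qubit restores the original state. -/
theorem bit_flip_qubit3_syndrome :
    ∃ α : ℂ, α ≠ 0 ∧ ∀ c : Fin 2 → ℂ,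
      dec (bitFlip 2 (enc c)) = α • synData ![0, 0, 1, 1] (c 0) (-(c 1)) := by
  refine ⟨32, by norm_num, fun c => ?_⟩
  ext z
  rw [dec_bitFlip_two_enc_apply]
  simp only [sum_pi_fin_two_neg_one_pow_sum_mul, bitFlipTwoPhaseCoeff_even_iff, Fin.sum_univ_two,
    synData, WithLp.ofLp_smul, Pi.smul_apply, smul_eq_mul]
  by_cases hs : z 0 = 0 ∧ z 1 = 0 ∧ z 2 = 1 ∧ z 3 = 1
  · generalize z 4 = b
    fin_cases b <;> simp [hs] <;> ring
  · simp [hs]
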